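/- If M is a module of KB w.r.t. Sig, then for all axioms α with sig(α) ⊆ Sig, M ⊨ α iff KB ⊨ α, assuming the semantic property of locality: every model of M extends to a model of KB that agrees on the interpretation of symbols in sig(M) ∪ Sig. -/
import Mathlib


/-- Conservativity of modules: if `M ⊆ KB`, satisfaction depends only on the
symbols of an axiom, and every model of `M` extends to a model of `KB`
agreeing on `sig(M) ∪ Sig`, then for every query `α` with `sig(α) ⊆ Sig`:
`M ⊨ α` iff `KB ⊨ α`. -/
theorem module_conservativity {Symbol V Axiom : Type*}
    (sig : Axiom → Set Symbol)
    (sat : (Symbol → V) → Axiom → Prop)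
    (sat_congr : ∀ i i' α, (∀ s ∈ sig α, i s = i' s) → (sat i α ↔ sat i' α))
    (M KB : Set Axiom) (Sig : Set Symbol)
    (hMKB : M ⊆ KB)
    (hext : ∀ i : Symbol → V, (∀ β ∈ M, sat i β) →
      ∃ i' : Symbol → V, (∀ β ∈ KB, sat i' β) ∧
        ∀ s ∈ (⋃ α ∈ M, sig α) ∪ Sig, i' s = i s)
    (α : Axiom) (hα : sig α ⊆ Sig) :
    ((∀ i, (∀ β ∈ M, sat i β) → sat i α) ↔
     (∀ i, (∀ β ∈ KB, sat i β) → sat i α)) := by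
  constructor
  · intro h i hi
    exact h i fun β hβ => hi β (hMKB hβ)
  · intro h i hi
    obtain ⟨i', hi', hagree⟩ := hext i hi
    have := h i' hi'
    exact (sat_congr i i' α (fun s hs => (hagree s (Or.inr (hα hs))).symm)).mpr this
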